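/- Let J, D be real N×N matrices, h, u ∈ ℝ^N, W := J - D, and Z_{J,h} := ∑_{x∈{±1}^N} exp(∑_{ij} J_{ij} x_i x_j + ∑_i h_i x_i), similarly Z_{D,u}. Then |ln Z_{J,h} - ln Z_{D,u}| ≤ ‖W‖_{∞→1} + √N · ‖h - u‖₂. -/
import Mathlib


/-- The value of a spin: `true ↦ 1`, `false ↦ -1`. -/
noncomputable def spin (b : Bool) : ℝ := if b then 1 else -1

/-- The `∞→1` norm of a matrix: the maximum of `|xᵀ W y|` over sign vectors. -/
noncomputable def infOneNorm (N : ℕ) (W : Matrix (Fin N) (Fin N) ℝ) : ℝ :=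
  sSup {v : ℝ | ∃ x y : Fin N → Bool,
    v = |∑ i, ∑ j, W i j * spin (x i) * spin (y j)|}

lemma spin_sq (b : Bool) : spin b ^ 2 = 1 := by
  cases b <;> simp [spin]

lemma abs_le_infOneNorm (N : ℕ) (W : Matrix (Fin N) (Fin N) ℝ) (σ τ : Fin N → Bool) :
    |∑ i, ∑ j, W i j * spin (σ i) * spin (τ j)| ≤ infOneNorm N W := by
  have hset : {v : ℝ | ∃ x y : Fin N → Bool,
      v = |∑ i, ∑ j, W i j * spin (x i) * spin (y j)|} =
      Set.range (fun p : (Fin N → Bool) × (Fin N → Bool) =>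
        |∑ i, ∑ j, W i j * spin (p.1 i) * spin (p.2 j)|) := by
    ext v
    constructor
    · rintro ⟨x, y, rfl⟩; exact ⟨(x, y), rfl⟩
    · rintro ⟨⟨x, y⟩, rfl⟩; exact ⟨x, y, rfl⟩
  apply le_csSup
  · rw [hset]; exact (Set.finite_range _).bddAbove
  · exact ⟨σ, τ, rfl⟩

lemma log_sum_exp_comp {ι : Type*} [Fintype ι] [Nonempty ι] (a b : ι → ℝ) (c : ℝ)
    (hc : ∀ i, a i - b i ≤ c) :
    Real.log (∑ i, Real.exp (a i)) - Real.log (∑ i, Real.exp (b i)) ≤ c := by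
  have hpos : 0 < ∑ i, Real.exp (b i) :=
    Finset.sum_pos (fun i _ => Real.exp_pos _) Finset.univ_nonempty
  have hle : (∑ i, Real.exp (a i)) ≤ Real.exp c * ∑ i, Real.exp (b i) := by
    rw [Finset.mul_sum]
    apply Finset.sum_le_sum
    intro i _
    rw [← Real.exp_add]
    exact Real.exp_le_exp.2 (by linarith [hc i])
  calc Real.log (∑ i, Real.exp (a i)) - Real.log (∑ i, Real.exp (b i))
      ≤ Real.log (Real.exp c * ∑ i, Real.exp (b i)) - Real.log (∑ i, Real.exp (b i)) := by
        gcongr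
    _ = c := by
        rw [Real.log_mul (Real.exp_ne_zero _) (ne_of_gt hpos), Real.log_exp]; ring

theorem log_partition_difference_with_fields_bound
    (N : ℕ) (J D : Matrix (Fin N) (Fin N) ℝ) (h u : Fin N → ℝ) :
    |Real.log (∑ σ : Fin N → Bool,
        Real.exp ((∑ i, ∑ j, J i j * spin (σ i) * spin (σ j)) + ∑ i, h i * spin (σ i)))
      - Real.log (∑ σ : Fin N → Bool,
        Real.exp ((∑ i, ∑ j, D i j * spin (σ i) * spin (σ j)) + ∑ i, u i * spin (σ i)))| ≤
      infOneNorm N (J - D) + Real.sqrt N * Real.sqrt (∑ i, (h i - u i) ^ 2) := by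
  set a : (Fin N → Bool) → ℝ := fun σ =>
    (∑ i, ∑ j, J i j * spin (σ i) * spin (σ j)) + ∑ i, h i * spin (σ i)
  set b : (Fin N → Bool) → ℝ := fun σ =>
    (∑ i, ∑ j, D i j * spin (σ i) * spin (σ j)) + ∑ i, u i * spin (σ i)
  set c : ℝ := infOneNorm N (J - D) + Real.sqrt N * Real.sqrt (∑ i, (h i - u i) ^ 2)
  have key : ∀ σ : Fin N → Bool, |a σ - b σ| ≤ c := by
    intro σ
    have hW : a σ - b σ = (∑ i, ∑ j, (J - D) i j * spin (σ i) * spin (σ j))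
        + ∑ i, (h i - u i) * spin (σ i) := by
      simp only [a, b, Matrix.sub_apply, sub_mul, Finset.sum_sub_distrib]
      ring
    have h1 : |∑ i, ∑ j, (J - D) i j * spin (σ i) * spin (σ j)| ≤ infOneNorm N (J - D) :=
      abs_le_infOneNorm N (J - D) σ σ
    have h2 : |∑ i, (h i - u i) * spin (σ i)| ≤
        Real.sqrt N * Real.sqrt (∑ i, (h i - u i) ^ 2) := by
      have cs := Finset.sum_mul_sq_le_sq_mul_sq Finset.univ
        (fun i => h i - u i) (fun i => spin (σ i))
      simp only [spin_sq, Finset.sum_const, Finset.card_univ, Fintype.card_fin,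
        nsmul_eq_mul, mul_one] at cs
      rw [← Real.sqrt_sq_eq_abs]
      have heq : Real.sqrt N * Real.sqrt (∑ i, (h i - u i) ^ 2) =
          Real.sqrt ((∑ i, (h i - u i) ^ 2) * N) := by
        rw [Real.sqrt_mul (by positivity), mul_comm]
      rw [heq]
      exact Real.sqrt_le_sqrt cs
    calc |a σ - b σ| ≤ |∑ i, ∑ j, (J - D) i j * spin (σ i) * spin (σ j)|
          + |∑ i, (h i - u i) * spin (σ i)| := by rw [hW]; exact abs_add_le _ _
      _ ≤ c := add_le_add h1 h2
  rw [abs_sub_le_iff]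
  exact ⟨log_sum_exp_comp a b c (fun σ => (abs_le.1 (key σ)).2),
    log_sum_exp_comp b a c (fun σ => by have := (abs_le.1 (key σ)).1; linarith)⟩
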